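/- arXiv:1604.04248 — 3 statements merged into one kernel-verified Lean document; each statement's English description precedes it below -/
import Mathlib

section
/- Let M ≥ 1 be an integer, λ1, λ2 > 0, and z ∈ ℝ. Then ∫₀^∞ [2 x^{2M−1} e^{−x²/λ1}/(Γ(M) λ1^M)] · [e^{−(z−x)²/λ2}/√(π λ2)] dx = [e^{−(z²/λ2)(1 − λ1/(λ1+λ2))}/(Γ(M) λ1^M √(π λ2))] · ∑_{n=0}^{2M−1} binom(2M−1, n) · (z/λ2)^{2M−1−n} · (1/λ1 + 1/λ2)^{−(2M−(n+1)/2)} · [Γ((n+1)/2) + c_n(z)·γ((n+1)/2, (z²/λ2)·λ1/(λ1+λ2))]. (This is the probability density function, at the point z, of the sum of a scaled chi variable with density f_{M,λ1} and an independent real Gaussian N(0, λ2/2).) -/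
open Real MeasureTheory Finset

set_option maxRecDepth 8000
set_option maxHeartbeats 1000000

/-- The lower incomplete gamma function `γ(s, x) = ∫₀ˣ t^(s-1) e^(-t) dt`. -/
noncomputable def lowerIncGamma (s x : ℝ) : ℝ :=
  ∫ t in Set.Ioc (0 : ℝ) x, t ^ (s - 1) * Real.exp (-t)

/-- The sign coefficient `c_n(z) = (-1)^n` if `z ≥ 0` and `c_n(z) = -1` if `z < 0`. -/
noncomputable def cSign (n : ℕ) (z : ℝ) : ℝ :=
  if 0 ≤ z then (-1 : ℝ) ^ n else -1

lemma integrable_pow_mul_exp_neg_mul_sq' {b : ℝ} (hb : 0 < b) (n : ℕ) :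
    Integrable fun x : ℝ => x ^ n * Real.exp (-b * x ^ 2) := by
  have h := integrable_rpow_mul_exp_neg_mul_sq hb (s := (n : ℝ))
    (by linarith [Nat.cast_nonneg (α := ℝ) n])
  simpa [Real.rpow_natCast] using h

lemma integral_Ioi_pow_mul_exp (n : ℕ) {b : ℝ} (hb : 0 < b) :
    ∫ x in Set.Ioi (0:ℝ), x ^ n * Real.exp (-b * x ^ 2)
      = (1/2) * b ^ (-(((n:ℝ)+1)/2)) * Real.Gamma (((n:ℝ)+1)/2) := by
  have h := integral_rpow_mul_exp_neg_mul_rpow (p := 2) (q := (n:ℝ)) (b := b) two_pos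
    (by linarith [Nat.cast_nonneg (α := ℝ) n]) hb
  simp_rw [show (2:ℝ) = ((2:ℕ):ℝ) by norm_num, Real.rpow_natCast] at h
  rw [h]; rw [neg_div]; ring

lemma lowerIncGamma_scaled (n : ℕ) {b m : ℝ} (hb : 0 < b) (hm : 0 ≤ m) :
    ∫ x in Set.Ioc (0:ℝ) m, x ^ n * Real.exp (-b * x ^ 2)
      = (1/2) * b ^ (-(((n:ℝ)+1)/2)) * lowerIncGamma (((n:ℝ)+1)/2) (b * m ^ 2) := by
  set s : ℝ := ((n:ℝ)+1)/2 with hs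
  have himg : (fun x : ℝ => b * x ^ 2) '' Set.Ioc 0 m = Set.Ioc 0 (b * m ^ 2) := by
    ext y
    simp only [Set.mem_image, Set.mem_Ioc]
    constructor
    · rintro ⟨x, ⟨hx0, hxm⟩, rfl⟩
      exact ⟨by positivity, mul_le_mul_of_nonneg_left (pow_le_pow_left₀ hx0.le hxm 2) hb.le⟩
    · rintro ⟨hy0, hym⟩
      refine ⟨Real.sqrt (y / b), ⟨Real.sqrt_pos.mpr (by positivity), ?_⟩, ?_⟩
      · have h1 : y / b ≤ m ^ 2 := (div_le_iff₀ hb).mpr (by nlinarith)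
        calc Real.sqrt (y / b) ≤ Real.sqrt (m ^ 2) := Real.sqrt_le_sqrt h1
          _ = m := by rw [Real.sqrt_sq hm]
      · rw [Real.sq_sqrt (by positivity : (0:ℝ) ≤ y / b)]
        field_simp
  have hder : ∀ x ∈ Set.Ioc (0:ℝ) m, HasDerivWithinAt (fun x : ℝ => b * x ^ 2)
      (b * (2 * x)) (Set.Ioc 0 m) x := by
    intro x _
    simpa using ((hasDerivAt_pow 2 x).const_mul b).hasDerivWithinAt
  have hinj : Set.InjOn (fun x : ℝ => b * x ^ 2) (Set.Ioc 0 m) := by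
    intro x hx y hy h
    have h2 : x ^ 2 = y ^ 2 := mul_left_cancel₀ hb.ne' h
    nlinarith [hx.1, hy.1]
  have hcv := integral_image_eq_integral_abs_deriv_smul measurableSet_Ioc hder hinj
    (fun t => t ^ (s - 1) * Real.exp (-t))
  rw [himg] at hcv
  have hpt : ∀ x ∈ Set.Ioc (0:ℝ) m,
      |b * (2 * x)| • ((b * x ^ 2) ^ (s - 1) * Real.exp (-(b * x ^ 2)))
        = (2 * b ^ s) * (x ^ n * Real.exp (-b * x ^ 2)) := by
    intro x hx
    have hx0 : 0 < x := hx.1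
    have h1 : (b * x ^ 2) ^ (s - 1) = b ^ (s - 1) * x ^ (2 * (s - 1)) := by
      rw [Real.mul_rpow hb.le (sq_nonneg x), ← Real.rpow_natCast x 2,
        ← Real.rpow_mul hx0.le]
      norm_num
    have h2 : b * b ^ (s - 1) = b ^ s := by
      rw [Real.rpow_sub hb, Real.rpow_one]
      field_simp
    have h3 : x * x ^ (2 * (s - 1)) = x ^ n := by
      have e1 : x * x ^ (2 * (s - 1)) = x ^ (1 + 2 * (s - 1)) := by
        rw [Real.rpow_add hx0, Real.rpow_one]
      rw [e1, show 1 + 2 * (s - 1) = (n : ℝ) by rw [hs]; ring, Real.rpow_natCast]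
    rw [abs_of_pos (by positivity), smul_eq_mul, h1]
    calc b * (2 * x) * (b ^ (s - 1) * x ^ (2 * (s - 1)) * Real.exp (-(b * x ^ 2)))
        = 2 * (b * b ^ (s - 1)) * ((x * x ^ (2 * (s - 1))) * Real.exp (-(b * x ^ 2))) := by ring
      _ = (2 * b ^ s) * (x ^ n * Real.exp (-b * x ^ 2)) := by rw [h2, h3]; ring
  rw [setIntegral_congr_fun measurableSet_Ioc hpt, MeasureTheory.integral_const_mul] at hcv
  rw [lowerIncGamma, hcv]
  have hbb : b ^ (-s) * b ^ s = 1 := by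
    rw [← Real.rpow_add hb]; simp
  set I := ∫ (a : ℝ) in Set.Ioc (0:ℝ) m, a ^ n * rexp (-b * a ^ 2) with hI
  linear_combination (-I) * hbb

lemma integral_Ioi_neg_pow_mul_exp (n : ℕ) {b : ℝ} (hb : 0 < b) (μ : ℝ) :
    ∫ u in Set.Ioi (-μ), u ^ n * Real.exp (-b * u ^ 2)
      = (1/2) * b ^ (-(((n:ℝ)+1)/2)) *
        (Real.Gamma (((n:ℝ)+1)/2)
          + (if 0 ≤ μ then (-1:ℝ)^n else -1) * lowerIncGamma (((n:ℝ)+1)/2) (b * μ ^ 2)) := by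
  have hint := integrable_pow_mul_exp_neg_mul_sq' hb n
  by_cases hμ : 0 ≤ μ
  · rw [if_pos hμ]
    rw [← Set.Ioc_union_Ioi_eq_Ioi (show -μ ≤ (0:ℝ) by linarith),
      MeasureTheory.setIntegral_union (Set.Ioc_disjoint_Ioi le_rfl) measurableSet_Ioi
        hint.integrableOn hint.integrableOn]
    have hneg := intervalIntegral.integral_comp_neg (a := (0:ℝ)) (b := μ)
      (fun x => x ^ n * Real.exp (-b * x ^ 2))
    simp only [neg_zero] at hneg
    have hIoc : ∫ u in Set.Ioc (-μ) 0, u ^ n * Real.exp (-b * u ^ 2)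
        = (-1:ℝ)^n * ∫ x in Set.Ioc 0 μ, x ^ n * Real.exp (-b * x ^ 2) := by
      have hfun : ∀ x : ℝ, (-x) ^ n * Real.exp (-b * (-x) ^ 2)
          = (-1:ℝ) ^ n * (x ^ n * Real.exp (-b * x ^ 2)) := by
        intro x
        rw [neg_pow, neg_sq]
        ring
      rw [← intervalIntegral.integral_of_le (show -μ ≤ (0:ℝ) by linarith), ← hneg]
      simp only [hfun]
      rw [intervalIntegral.integral_const_mul, intervalIntegral.integral_of_le hμ]
    rw [hIoc, lowerIncGamma_scaled n hb hμ, integral_Ioi_pow_mul_exp n hb]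
    ring
  · push_neg at hμ
    have hsplit := Set.Ioc_union_Ioi_eq_Ioi (show (0:ℝ) ≤ -μ by linarith)
    have hu := MeasureTheory.setIntegral_union (s := Set.Ioc (0:ℝ) (-μ)) (t := Set.Ioi (-μ))
      (f := fun u => u ^ n * Real.exp (-b * u ^ 2)) (μ := volume)
      (Set.Ioc_disjoint_Ioi le_rfl) measurableSet_Ioi hint.integrableOn hint.integrableOn
    rw [hsplit, integral_Ioi_pow_mul_exp n hb,
      lowerIncGamma_scaled n hb (show (0:ℝ) ≤ -μ by linarith)] at hu
    rw [if_neg (not_le.mpr hμ)]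
    have hsq : (-μ) ^ 2 = μ ^ 2 := by ring
    rw [hsq] at hu
    linarith

/-- The density, at the point `z`, of the sum of a scaled chi variable with density
`f_{M,λ₁}` and an independent real Gaussian `N(0, λ₂/2)`: the convolution integral
`∫₀^∞ [2 x^{2M-1} e^{-x²/λ₁}/(Γ(M) λ₁^M)] [e^{-(z-x)²/λ₂}/√(π λ₂)] dx` equals the
stated closed form. -/
theorem scaledChi_gaussian_convolution_pdf
    (M : ℕ) (hM : 1 ≤ M) (l1 l2 : ℝ) (hl1 : 0 < l1) (hl2 : 0 < l2) (z : ℝ) :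
    ∫ x in Set.Ioi (0 : ℝ),
        (2 * x ^ (2 * M - 1) * Real.exp (-x ^ 2 / l1) / (Real.Gamma M * l1 ^ M)) *
          (Real.exp (-(z - x) ^ 2 / l2) / Real.sqrt (Real.pi * l2))
      = Real.exp (-(z ^ 2 / l2) * (1 - l1 / (l1 + l2))) /
          (Real.Gamma M * l1 ^ M * Real.sqrt (Real.pi * l2)) *
        ∑ n ∈ Finset.range (2 * M), ((2 * M - 1).choose n : ℝ) *
          (z / l2) ^ (2 * M - 1 - n) *
          (1 / l1 + 1 / l2) ^ (-((2 * M : ℝ) - (n + 1) / 2)) *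
          (Real.Gamma ((n + 1) / 2) +
            cSign n z * lowerIncGamma ((n + 1) / 2) ((z ^ 2 / l2) * (l1 / (l1 + l2)))) := by
  have hl12 : (0:ℝ) < l1 + l2 := by linarith
  set k := 2 * M - 1 with hkdef
  have hk : k + 1 = 2 * M := by omega
  set b : ℝ := 1 / l1 + 1 / l2 with hbdef
  have hb : 0 < b := by rw [hbdef]; positivity
  set μ : ℝ := z * l1 / (l1 + l2) with hμdef
  have hzl2 : z / l2 = b * μ := by
    rw [hbdef, hμdef]; field_simp; ring
  have hX : z ^ 2 / l2 * (l1 / (l1 + l2)) = b * μ ^ 2 := by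
    rw [hbdef, hμdef]; field_simp; ring
  have hsign : (0 ≤ z) = (0 ≤ μ) := by
    apply propext
    constructor
    · intro hz
      rw [hμdef]
      exact div_nonneg (mul_nonneg hz hl1.le) hl12.le
    · intro hμ0
      by_contra hz
      push_neg at hz
      have : μ < 0 := by
        rw [hμdef]
        exact div_neg_of_neg_of_pos (mul_neg_of_neg_of_pos hz hl1) hl12
      linarith
  set K : ℝ := Real.exp (-(z ^ 2 / l2) * (1 - l1 / (l1 + l2))) /
      (Real.Gamma M * l1 ^ M * Real.sqrt (Real.pi * l2)) with hKdef
  have hpt : ∀ x : ℝ,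
      (2 * x ^ k * Real.exp (-x ^ 2 / l1) / (Real.Gamma M * l1 ^ M)) *
        (Real.exp (-(z - x) ^ 2 / l2) / Real.sqrt (Real.pi * l2))
      = (2 * K) * (x ^ k * Real.exp (-b * (x - μ) ^ 2)) := by
    intro x
    have hexp : Real.exp (-x ^ 2 / l1) * Real.exp (-(z - x) ^ 2 / l2)
        = Real.exp (-(z ^ 2 / l2) * (1 - l1 / (l1 + l2))) * Real.exp (-b * (x - μ) ^ 2) := by
      rw [← Real.exp_add, ← Real.exp_add]
      congr 1
      rw [hbdef, hμdef]
      field_simp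
      ring
    calc (2 * x ^ k * Real.exp (-x ^ 2 / l1) / (Real.Gamma M * l1 ^ M)) *
          (Real.exp (-(z - x) ^ 2 / l2) / Real.sqrt (Real.pi * l2))
        = (Real.exp (-x ^ 2 / l1) * Real.exp (-(z - x) ^ 2 / l2)) * (2 * x ^ k) /
            (Real.Gamma M * l1 ^ M * Real.sqrt (Real.pi * l2)) := by ring
      _ = (2 * K) * (x ^ k * Real.exp (-b * (x - μ) ^ 2)) := by
          rw [hexp, hKdef]; ring
  simp_rw [hpt]
  rw [MeasureTheory.integral_const_mul]
  have htrans : ∫ x in Set.Ioi (0:ℝ), x ^ k * Real.exp (-b * (x - μ) ^ 2)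
      = ∫ u in Set.Ioi (-μ), (u + μ) ^ k * Real.exp (-b * u ^ 2) := by
    have A : MeasurableEmbedding (fun u : ℝ => u + μ) :=
      (Homeomorph.addRight μ).isClosedEmbedding.measurableEmbedding
    have hmap := MeasurableEmbedding.setIntegral_map (μ := volume) A
      (fun x => x ^ k * Real.exp (-b * (x - μ) ^ 2)) (Set.Ioi 0)
    rw [map_add_right_eq_self volume μ] at hmap
    have hpre : (fun u : ℝ => u + μ) ⁻¹' (Set.Ioi 0) = Set.Ioi (-μ) := by
      ext u
      simp only [Set.mem_preimage, Set.mem_Ioi]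
      constructor <;> intro <;> linarith
    rw [hpre] at hmap
    rw [hmap]
    refine setIntegral_congr_fun measurableSet_Ioi fun u _ => ?_
    simp [add_sub_cancel_right]
  rw [htrans]
  have hptsum : ∀ u : ℝ, (u + μ) ^ k * Real.exp (-b * u ^ 2)
      = ∑ n ∈ Finset.range (2 * M),
          (μ ^ (k - n) * (k.choose n : ℝ)) * (u ^ n * Real.exp (-b * u ^ 2)) := by
    intro u
    rw [← hk, add_pow, Finset.sum_mul]
    exact Finset.sum_congr rfl fun n _ => by ring
  simp_rw [hptsum]
  rw [MeasureTheory.integral_finset_sum _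
    (fun n _ => ((integrable_pow_mul_exp_neg_mul_sq' hb n).const_mul _).integrableOn)]
  rw [Finset.mul_sum, Finset.mul_sum]
  refine Finset.sum_congr rfl fun n hn => ?_
  have hn' : n ≤ k := by
    have := Finset.mem_range.mp hn
    omega
  rw [MeasureTheory.integral_const_mul, integral_Ioi_neg_pow_mul_exp n hb μ, hX]
  simp only [cSign, hsign]
  set T : ℝ := Real.Gamma (((n:ℝ) + 1) / 2)
    + (if 0 ≤ μ then (-1:ℝ) ^ n else -1) * lowerIncGamma (((n:ℝ) + 1) / 2) (b * μ ^ 2) with hT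
  have hexp2 : ((k - n : ℕ) : ℝ) + (-((2 * (M:ℝ)) - ((n:ℝ) + 1) / 2)) = -(((n:ℝ) + 1) / 2) := by
    have h1 : ((k - n : ℕ) : ℝ) = (k : ℝ) - n := by
      rw [Nat.cast_sub hn']
    have h2 : (k : ℝ) = 2 * (M : ℝ) - 1 := by
      rw [hkdef, Nat.cast_sub (show 1 ≤ 2 * M by omega)]
      push_cast
      ring
    rw [h1, h2]
    ring
  have hbfinal : (b : ℝ) ^ (k - n) * b ^ (-((2 * (M:ℝ)) - ((n:ℝ) + 1) / 2))
      = b ^ (-(((n:ℝ) + 1) / 2)) := by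
    rw [← Real.rpow_natCast b (k - n), ← Real.rpow_add hb, hexp2]
  rw [show (z / l2) ^ (k - n) = b ^ (k - n) * μ ^ (k - n) from by rw [hzl2, mul_pow]]
  linear_combination (-(K * ((k.choose n : ℕ) : ℝ) * μ ^ (k - n) * T)) * hbfinal
end

section
/- Let M ≥ 1 be an integer, λ1, λ2 > 0, and b ∈ ℝ. Then ∫₀^∞ [γ(M, x²/λ1)/Γ(M)] · [e^{−(b−x)²/λ2}/√(π λ2)] dx = Q(−b√2/√λ2) − ∑_{k=0}^{M−1} [e^{−(b²/λ2)(1 − λ1/(λ1+λ2))}/(Γ(k+1) λ1^k √(π λ2))] · ∑_{n=0}^{2k} binom(2k, n) · (b/λ2)^{2k−n} · (1/λ1 + 1/λ2)^{−(2k+1/2−n/2)} · [Γ((n+1)/2) + c_n(b)·γ((n+1)/2, (b²/λ2)·λ1/(λ1+λ2))]/2. (This is the cumulative distribution function, at the point b, of the sum of a scaled chi variable with density f_{M,λ1} and an independent real Gaussian N(0, λ2/2).) -/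
open Real MeasureTheory Finset

/-- The Gaussian Q-function `Q(x) = (1/√(2π)) ∫_x^∞ e^{-t²/2} dt`. -/
noncomputable def gaussQ (x : ℝ) : ℝ :=
  (1 / Real.sqrt (2 * Real.pi)) * ∫ t in Set.Ioi x, Real.exp (-t ^ 2 / 2)

/-! For integer `M`, `γ(M, y) / Γ(M) = 1 - e^{-y} ∑_{k<M} y^k / k!`, so the integrand is the
Gaussian density, whose integral over `(0, ∞)` is a value of `Q`, minus the terms
`x^{2k} e^{-x²/λ₁} e^{-(b-x)²/λ₂}`. Completing the square turns each of these into a shifted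
Gaussian moment `x^{2k} e^{-A(x-μ)²}` with `A = 1/λ₁ + 1/λ₂` and `μ = bλ₁/(λ₁+λ₂)`. Expanding
`(u + μ)^{2k}` binomially leaves the moments `∫_{-μ}^∞ uⁿ e^{-Au²} du`; the substitution `t = Au²`
gives `Γ((n+1)/2)` for the half-line `(0, ∞)` and `γ((n+1)/2, Aμ²)` for the piece between `0` and
`-μ`, which enters with the sign `c_n(μ) = c_n(b)` by the parity of `uⁿ`. -/

open Set Nat

theorem hasDerivAt_exp_neg_mul_sum_pow_div_factorial (m : ℕ) (t : ℝ) :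
    HasDerivAt (fun t => exp (-t) * ∑ k ∈ range (m + 1), t ^ k / k !)
      (-(exp (-t) * (t ^ m / m !))) t := by
  have hexp : HasDerivAt (fun t : ℝ => exp (-t)) (-exp (-t)) t := by
    simpa using (hasDerivAt_neg t).exp
  induction m with
  | zero => simpa using hexp
  | succ m ih =>
    have hterm := hexp.fun_mul ((hasDerivAt_pow (m + 1) t).div_const ((m + 1)! : ℝ))
    simp_rw [sum_range_succ _ (m + 1), mul_add]
    refine (ih.add hterm).congr_deriv ?_
    rw [Nat.factorial_succ, add_tsub_cancel_right]
    push_cast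
    field_simp
    ring

theorem lowerIncGamma_natCast_add_one (m : ℕ) {y : ℝ} (hy : 0 ≤ y) :
    lowerIncGamma (m + 1) y = m ! * (1 - exp (-y) * ∑ k ∈ range (m + 1), y ^ k / k !) := by
  have hF (t : ℝ) : HasDerivAt (fun t => -(m ! : ℝ) * (exp (-t) * ∑ k ∈ range (m + 1), t ^ k / k !))
      (t ^ m * exp (-t)) t := by
    refine ((hasDerivAt_exp_neg_mul_sum_pow_div_factorial m t).const_mul _).congr_deriv ?_
    field_simp
  rw [lowerIncGamma, ← intervalIntegral.integral_of_le hy, add_sub_cancel_right]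
  simp_rw [rpow_natCast]
  rw [intervalIntegral.integral_eq_sub_of_hasDerivAt (fun t _ => hF t)
    ((by fun_prop : Continuous fun t : ℝ => t ^ m * exp (-t)).intervalIntegrable _ _)]
  have hS0 : ∑ k ∈ range (m + 1), (0 : ℝ) ^ k / k ! = 1 := by simp [sum_range_succ']
  simp only [neg_zero, exp_zero, hS0]
  ring

theorem integral_comp_add_right_Ioi {E : Type*} [NormedAddCommGroup E] [NormedSpace ℝ E]
    (f : ℝ → E) (a c : ℝ) : ∫ x in Ioi a, f (x + c) = ∫ x in Ioi (a + c), f x := by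
  simpa only [preimage_add_const_Ioi, add_sub_cancel_right] using
    (measurePreserving_add_right volume c).setIntegral_preimage_emb
      (measurableEmbedding_addRight c) f (Ioi (a + c))

section GaussianMoments

variable {a : ℝ}

theorem integral_Ioi_pow_mul_exp_neg_mul_sq (n : ℕ) (ha : 0 < a) :
    ∫ u in Ioi 0, u ^ n * exp (-a * u ^ 2)
      = Gamma ((n + 1) / 2) / (2 * a ^ (((n : ℝ) + 1) / 2)) := by
  have h := integral_rpow_mul_exp_neg_mul_rpow two_pos (by linarith [n.cast_nonneg (α := ℝ)] :
    -1 < (n : ℝ)) ha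
  simp only [rpow_two, rpow_natCast] at h
  rw [h, neg_div, rpow_neg ha.le]
  field_simp

theorem integral_Ioc_pow_mul_exp_neg_mul_sq (n : ℕ) (ha : 0 < a) {x : ℝ} (hx : 0 ≤ x) :
    ∫ u in Ioc 0 x, u ^ n * exp (-a * u ^ 2)
      = lowerIncGamma ((n + 1) / 2) (a * x ^ 2) / (2 * a ^ (((n : ℝ) + 1) / 2)) := by
  set s : ℝ := ((n : ℝ) + 1) / 2
  have hmono : StrictMonoOn (fun u : ℝ => a * u ^ 2) (Icc 0 x) :=
    fun u hu _ _ huv => mul_lt_mul_of_pos_left (pow_lt_pow_left₀ huv hu.1 two_ne_zero) ha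
  have himage : (fun u : ℝ => a * u ^ 2) '' Ioc 0 x = Ioc 0 (a * x ^ 2) := by
    simpa using (continuous_const.mul (continuous_pow 2)).continuousOn.image_Ioc_of_strictMonoOn
      hx hmono
  have hderiv (u : ℝ) : HasDerivWithinAt (fun u : ℝ => a * u ^ 2) (2 * a * u) (Ioc 0 x) u :=
    (((hasDerivAt_pow 2 u).const_mul a).congr_deriv (by ring)).hasDerivWithinAt
  have hintegrand : ∀ u ∈ Ioc 0 x, |2 * a * u| • ((a * u ^ 2) ^ (s - 1) * exp (-(a * u ^ 2)))
      = 2 * a ^ s * (u ^ n * exp (-a * u ^ 2)) := fun u ⟨hu, _⟩ => by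
    have hpow : (a * u ^ 2) ^ s = a ^ s * u ^ (n + 1) := by
      rw [mul_rpow ha.le (by positivity), ← rpow_natCast u 2, ← rpow_mul hu.le, ← rpow_natCast]
      congr 2
      push_cast
      ring
    rw [smul_eq_mul, abs_of_pos (by positivity), rpow_sub_one (by positivity), hpow, pow_succ]
    field_simp
  rw [lowerIncGamma, ← himage, integral_image_eq_integral_abs_deriv_smul measurableSet_Ioc
    (fun u _ => hderiv u) (hmono.injOn.mono Ioc_subset_Icc_self),
    setIntegral_congr_fun measurableSet_Ioc hintegrand, integral_const_mul]
  field_simp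

theorem integrable_pow_mul_exp_neg_mul_sq (n : ℕ) (ha : 0 < a) :
    Integrable fun u : ℝ => u ^ n * exp (-a * u ^ 2) := by
  simpa [rpow_natCast] using integrable_rpow_mul_exp_neg_mul_sq ha
    (by linarith [n.cast_nonneg (α := ℝ)] : -1 < (n : ℝ))

theorem intervalIntegral_neg_zero_pow_mul_exp_neg_mul_sq (n : ℕ) (ha : 0 < a) (μ : ℝ) :
    ∫ u in -μ..0, u ^ n * exp (-a * u ^ 2)
      = cSign n μ * lowerIncGamma ((n + 1) / 2) (a * μ ^ 2) / (2 * a ^ (((n : ℝ) + 1) / 2)) := by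
  rcases le_or_gt 0 μ with hμ | hμ
  · have hreflect : ∫ u in -μ..0, u ^ n * exp (-a * u ^ 2)
        = (-1) ^ n * ∫ u in 0..μ, u ^ n * exp (-a * u ^ 2) := by
      have h := intervalIntegral.integral_comp_neg (a := 0) (b := μ)
        fun u => u ^ n * exp (-a * u ^ 2)
      rw [neg_zero] at h
      rw [← h, ← intervalIntegral.integral_const_mul]
      exact intervalIntegral.integral_congr fun u _ => by rw [neg_sq, neg_pow, mul_assoc]
    rw [hreflect, intervalIntegral.integral_of_le hμ, integral_Ioc_pow_mul_exp_neg_mul_sq n ha hμ,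
      cSign, if_pos hμ]
    ring
  · rw [intervalIntegral.integral_symm, intervalIntegral.integral_of_le (by linarith),
      integral_Ioc_pow_mul_exp_neg_mul_sq n ha (by linarith), cSign, if_neg (by linarith), neg_sq]
    ring

theorem integral_Ioi_neg_pow_mul_exp_neg_mul_sq (n : ℕ) (ha : 0 < a) (μ : ℝ) :
    ∫ u in Ioi (-μ), u ^ n * exp (-a * u ^ 2)
      = (Gamma ((n + 1) / 2) + cSign n μ * lowerIncGamma ((n + 1) / 2) (a * μ ^ 2))
          / (2 * a ^ (((n : ℝ) + 1) / 2)) := by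
  have hint (c : ℝ) := (integrable_pow_mul_exp_neg_mul_sq n ha).integrableOn (s := Ioi c)
  rw [← intervalIntegral.integral_interval_add_Ioi (hint _) (hint 0),
    intervalIntegral_neg_zero_pow_mul_exp_neg_mul_sq n ha, integral_Ioi_pow_mul_exp_neg_mul_sq n ha]
  ring


theorem add_pow_mul_exp_neg_mul_sq (N : ℕ) (μ u : ℝ) :
    (u + μ) ^ N * exp (-a * u ^ 2)
      = ∑ n ∈ range (N + 1), N.choose n * μ ^ (N - n) * (u ^ n * exp (-a * u ^ 2)) := by
  rw [add_pow, sum_mul]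
  exact sum_congr rfl fun n _ => by ring

theorem integrable_pow_mul_exp_neg_mul_sub_sq (N : ℕ) (ha : 0 < a) (μ : ℝ) :
    Integrable fun x : ℝ => x ^ N * exp (-a * (x - μ) ^ 2) := by
  have h : Integrable fun u : ℝ => (u + μ) ^ N * exp (-a * u ^ 2) := by
    simp_rw [add_pow_mul_exp_neg_mul_sq]
    exact integrable_finsetSum _ fun n _ => (integrable_pow_mul_exp_neg_mul_sq n ha).const_mul _
  simpa using h.comp_sub_right μ

theorem integral_Ioi_pow_mul_exp_neg_mul_sub_sq (N : ℕ) (ha : 0 < a) (μ : ℝ) :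
    ∫ x in Ioi 0, x ^ N * exp (-a * (x - μ) ^ 2)
      = ∑ n ∈ range (N + 1), N.choose n * μ ^ (N - n) *
          ((Gamma ((n + 1) / 2) + cSign n μ * lowerIncGamma ((n + 1) / 2) (a * μ ^ 2))
            / (2 * a ^ (((n : ℝ) + 1) / 2))) := by
  rw [← neg_add_cancel μ, ← integral_comp_add_right_Ioi]
  simp_rw [add_sub_cancel_right, add_pow_mul_exp_neg_mul_sq]
  rw [integral_finsetSum _ fun n _ =>
    ((integrable_pow_mul_exp_neg_mul_sq n ha).const_mul _).integrableOn]
  simp_rw [integral_const_mul, integral_Ioi_neg_pow_mul_exp_neg_mul_sq _ ha]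

end GaussianMoments

theorem integrable_exp_neg_sub_sq_div {v : ℝ} (hv : 0 < v) (b : ℝ) :
    Integrable fun x => exp (-(b - x) ^ 2 / v) := by
  convert (integrable_exp_neg_mul_sq (inv_pos.2 hv)).comp_sub_right b using 2 with x
  ring_nf

theorem integral_Ioi_exp_neg_sub_sq_div_eq_gaussQ {v : ℝ} (hv : 0 < v) (b : ℝ) :
    ∫ x in Ioi 0, exp (-(b - x) ^ 2 / v) / √(π * v) = gaussQ (-b * √2 / √v) := by
  set c := √2 / √v with hc_def
  have hc : 0 < c := by positivity
  have hscale (x : ℝ) : exp (-(b - x) ^ 2 / v) = exp (-(c * x + -(c * b)) ^ 2 / 2) := by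
    rw [← sub_eq_add_neg, ← mul_sub, mul_pow, hc_def, div_pow, sq_sqrt zero_le_two, sq_sqrt hv.le]
    field_simp
    ring_nf
  simp_rw [integral_div, hscale]
  rw [integral_comp_mul_left_Ioi (fun y => exp (-(y + -(c * b)) ^ 2 / 2)) 0 hc, mul_zero,
    integral_comp_add_right_Ioi (fun t => exp (-t ^ 2 / 2)), gaussQ, smul_eq_mul, zero_add,
    hc_def, sqrt_mul pi_pos.le, sqrt_mul zero_le_two]
  field_simp

theorem cSign_mul_of_pos (n : ℕ) (z : ℝ) {c : ℝ} (hc : 0 < c) : cSign n (z * c) = cSign n z := by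
  simp only [cSign, mul_nonneg_iff_of_pos_right hc]

theorem div_pow_sub_div_rpow_eq_mul_rpow_neg {A : ℝ} (hA : 0 < A) (c : ℝ) {n N : ℕ} (hn : n ≤ N) :
    (c / A) ^ (N - n) / A ^ (((n : ℝ) + 1) / 2)
      = c ^ (N - n) * A ^ (-((N : ℝ) + 1 / 2 - n / 2)) := by
  have hexp : -((N : ℝ) + 1 / 2 - n / 2) = -((N - n : ℕ) : ℝ) + -(((n : ℝ) + 1) / 2) := by
    rw [Nat.cast_sub hn]
    ring
  rw [hexp, rpow_add hA, rpow_neg hA.le, rpow_neg hA.le, rpow_natCast, div_pow]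
  field_simp

section Convolution

variable {l1 l2 : ℝ}

theorem exp_neg_sq_div_mul_exp_neg_sub_sq_div (hl1 : 0 < l1) (hl2 : 0 < l2) (b x : ℝ) :
    exp (-(x ^ 2 / l1)) * exp (-(b - x) ^ 2 / l2)
      = exp (-(b ^ 2 / l2) * (1 - l1 / (l1 + l2)))
          * exp (-(1 / l1 + 1 / l2) * (x - b * l1 / (l1 + l2)) ^ 2) := by
  rw [← exp_add, ← exp_add]
  congr 1
  field_simp
  ring

theorem lowerIncGamma_div_Gamma_mul_gaussian (m : ℕ) (hl1 : 0 < l1) (hl2 : 0 < l2) (b x : ℝ) :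
    lowerIncGamma (m + 1 : ℕ) (x ^ 2 / l1) / Gamma (m + 1 : ℕ)
        * (exp (-(b - x) ^ 2 / l2) / √(π * l2))
      = exp (-(b - x) ^ 2 / l2) / √(π * l2)
        - ∑ k ∈ range (m + 1), exp (-(b ^ 2 / l2) * (1 - l1 / (l1 + l2)))
            / (Gamma (k + 1) * l1 ^ k * √(π * l2))
            * (x ^ (2 * k) * exp (-(1 / l1 + 1 / l2) * (x - b * l1 / (l1 + l2)) ^ 2)) := by
  push_cast
  simp_rw [lowerIncGamma_natCast_add_one m (by positivity : 0 ≤ x ^ 2 / l1),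
    Gamma_nat_eq_factorial]
  rw [mul_div_cancel_left₀ _ (by positivity), sub_mul, one_mul, mul_sum, sum_mul]
  congr 1
  refine sum_congr rfl fun k _ => ?_
  linear_combination (x ^ (2 * k) / (l1 ^ k * k ! * √(π * l2)))
    * exp_neg_sq_div_mul_exp_neg_sub_sq_div hl1 hl2 b x

end Convolution

/-- The cumulative distribution function, at the point `b`, of the sum of a scaled chi
variable with density `f_{M,λ₁}` and an independent real Gaussian `N(0, λ₂/2)`:
`∫₀^∞ [γ(M, x²/λ₁)/Γ(M)] [e^{-(b-x)²/λ₂}/√(π λ₂)] dx` equals the stated closed form. -/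
theorem scaledChi_gaussian_convolution_cdf
    (M : ℕ) (hM : 1 ≤ M) (l1 l2 : ℝ) (hl1 : 0 < l1) (hl2 : 0 < l2) (b : ℝ) :
    ∫ x in Set.Ioi (0 : ℝ),
        (lowerIncGamma M (x ^ 2 / l1) / Real.Gamma M) *
          (Real.exp (-(b - x) ^ 2 / l2) / Real.sqrt (Real.pi * l2))
      = gaussQ (-b * Real.sqrt 2 / Real.sqrt l2) -
        ∑ k ∈ Finset.range M,
          Real.exp (-(b ^ 2 / l2) * (1 - l1 / (l1 + l2))) /
              (Real.Gamma (k + 1) * l1 ^ k * Real.sqrt (Real.pi * l2)) *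
            ∑ n ∈ Finset.range (2 * k + 1), ((2 * k).choose n : ℝ) *
              (b / l2) ^ (2 * k - n) *
              (1 / l1 + 1 / l2) ^ (-((2 * k : ℝ) + 1 / 2 - n / 2)) *
              ((Real.Gamma ((n + 1) / 2) +
                cSign n b * lowerIncGamma ((n + 1) / 2) ((b ^ 2 / l2) * (l1 / (l1 + l2)))) / 2) := by
  obtain ⟨m, rfl⟩ : ∃ m, M = m + 1 := ⟨M - 1, by omega⟩
  have hA : 0 < 1 / l1 + 1 / l2 := by positivity
  have hμ : b * l1 / (l1 + l2) = b / l2 / (1 / l1 + 1 / l2) := by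
    field_simp
    ring
  have hAμ : (1 / l1 + 1 / l2) * (b * l1 / (l1 + l2)) ^ 2 = b ^ 2 / l2 * (l1 / (l1 + l2)) := by
    field_simp
    ring
  have hsign (n : ℕ) : cSign n (b * l1 / (l1 + l2)) = cSign n b := by
    rw [mul_div_assoc, cSign_mul_of_pos _ _ (by positivity)]
  have hint (k : ℕ) := integrable_pow_mul_exp_neg_mul_sub_sq (2 * k) hA (b * l1 / (l1 + l2))
  simp_rw [lowerIncGamma_div_Gamma_mul_gaussian m hl1 hl2]
  rw [integral_sub ?gauss (integrable_finsetSum _ fun k _ => (hint k).integrableOn.const_mul _),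
    integral_finsetSum _ fun k _ => (hint k).integrableOn.const_mul _,
    integral_Ioi_exp_neg_sub_sq_div_eq_gaussQ hl2]
  case gauss => exact ((integrable_exp_neg_sub_sq_div hl2 b).div_const _).integrableOn
  refine congrArg _ (sum_congr rfl fun k _ => ?_)
  rw [integral_const_mul, integral_Ioi_pow_mul_exp_neg_mul_sub_sq _ hA, hAμ, mul_sum, mul_sum]
  refine sum_congr rfl fun n hn => ?_
  have hpow := div_pow_sub_div_rpow_eq_mul_rpow_neg hA (b / l2) (mem_range_succ_iff.mp hn)
  push_cast at hpow
  rw [hsign, hμ, mul_assoc _ ((b / l2) ^ _), ← hpow]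
  ring
end

section
/- Let ρ, q, β, τ, σ², Υ > 0 be reals with α ≥ ρβτ and let ε be a real with ε < ρβτ/2. Define λ1 = qρβ²τ²/(α+σ²), and for each integer M ≥ 1 define C_M = Γ(M+1/2)/Γ(M), ζ_M = C_M²·qρβ²τ²/(σ² + 2(ρβτ − ε)), and D_M = λ1·(M − C_M²) + σ² + Υ + qβτ − λ1 (which is positive). Then, as M → ∞, Q( (√ζ_M − C_M·√λ1)/√D_M ) converges to 0 if ρβτ < α/2 + ε, to 1/2 if ρβτ = α/2 + ε, and to 1 if ρβτ > α/2 + ε. -/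
open Real Filter MeasureTheory Topology

lemma gaussQ_integrable : Integrable (fun t : ℝ => Real.exp (-t ^ 2 / 2)) := by
  have he : (fun x : ℝ => Real.exp (-(1/2) * x ^ 2)) = fun t : ℝ => Real.exp (-t ^ 2 / 2) := by
    funext x; congr 1; ring
  exact he ▸ integrable_exp_neg_mul_sq (by norm_num : (0:ℝ) < 1/2)

lemma gaussQ_total : (∫ t : ℝ, Real.exp (-t ^ 2 / 2)) = Real.sqrt (2 * Real.pi) := by
  have h := integral_gaussian (1/2 : ℝ)
  have he : (fun x : ℝ => Real.exp (-(1/2) * x ^ 2)) = fun t : ℝ => Real.exp (-t ^ 2 / 2) := by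
    funext x; congr 1; ring
  rw [he] at h
  rw [h]
  congr 1
  ring

lemma gaussQ_zero : gaussQ 0 = 1 / 2 := by
  have h := integral_gaussian_Ioi (1/2 : ℝ)
  have he : (fun x : ℝ => Real.exp (-(1/2) * x ^ 2)) = fun t : ℝ => Real.exp (-t ^ 2 / 2) := by
    funext x; congr 1; ring
  rw [he] at h
  have hπ : Real.sqrt (π / (1/2)) = Real.sqrt (2 * π) := by
    rw [show π / (1/2 : ℝ) = 2 * π by ring]
  have hs : Real.sqrt (2 * π) ≠ 0 := by positivity
  rw [gaussQ, h, hπ]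
  field_simp

lemma gaussQ_tendsto_atTop : Tendsto gaussQ atTop (𝓝 0) := by
  have hf := gaussQ_integrable
  have h := intervalIntegral_tendsto_integral_Ioi 0 hf.integrableOn tendsto_id
  have h2 := (tendsto_const_nhds
      (x := ∫ t in Set.Ioi (0:ℝ), Real.exp (-t ^ 2 / 2)) (f := atTop)).sub h
  rw [sub_self] at h2
  simp only [id_eq] at h2
  have h3 : Tendsto (fun x : ℝ => ∫ t in Set.Ioi x, Real.exp (-t ^ 2 / 2)) atTop (𝓝 0) := by
    refine h2.congr' ?_
    filter_upwards [eventually_ge_atTop (0:ℝ)] with x hx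
    rw [intervalIntegral.integral_of_le hx]
    have hu : (∫ t in Set.Ioc (0:ℝ) x, Real.exp (-t ^ 2 / 2))
        + ∫ t in Set.Ioi x, Real.exp (-t ^ 2 / 2)
        = ∫ t in Set.Ioi (0:ℝ), Real.exp (-t ^ 2 / 2) := by
      rw [← setIntegral_union (Set.Ioc_disjoint_Ioi le_rfl) measurableSet_Ioi
        hf.integrableOn hf.integrableOn, Set.Ioc_union_Ioi_eq_Ioi hx]
    linarith
  have h4 := h3.const_mul (1 / Real.sqrt (2 * Real.pi))
  rw [mul_zero] at h4
  unfold gaussQ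
  exact h4

lemma gaussQ_tendsto_atBot : Tendsto gaussQ atBot (𝓝 1) := by
  have hf := gaussQ_integrable
  have h := intervalIntegral_tendsto_integral_Iic 0 hf.integrableOn tendsto_id
  have h2 := h.add (tendsto_const_nhds
      (x := ∫ t in Set.Ioi (0:ℝ), Real.exp (-t ^ 2 / 2)) (f := atBot))
  rw [intervalIntegral.integral_Iic_add_Ioi hf.integrableOn hf.integrableOn,
    gaussQ_total] at h2
  simp only [id_eq] at h2
  have h3 : Tendsto (fun x : ℝ => ∫ t in Set.Ioi x, Real.exp (-t ^ 2 / 2)) atBot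
      (𝓝 (Real.sqrt (2 * Real.pi))) := by
    refine h2.congr' ?_
    filter_upwards [eventually_le_atBot (0:ℝ)] with x hx
    rw [intervalIntegral.integral_of_le hx]
    rw [← setIntegral_union (Set.Ioc_disjoint_Ioi le_rfl) measurableSet_Ioi
      hf.integrableOn hf.integrableOn, Set.Ioc_union_Ioi_eq_Ioi hx]
  have h4 := h3.const_mul (1 / Real.sqrt (2 * Real.pi))
  have hs : Real.sqrt (2 * Real.pi) ≠ 0 := by positivity
  have : 1 / Real.sqrt (2 * Real.pi) * Real.sqrt (2 * Real.pi) = 1 := by field_simp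
  rw [this] at h4
  unfold gaussQ
  exact h4

lemma tendsto_sqrt_atTop' : Tendsto Real.sqrt atTop atTop := by
  refine tendsto_atTop.mpr fun b => ?_
  filter_upwards [eventually_ge_atTop (b ^ 2)] with x hx
  calc b ≤ |b| := le_abs_self b
    _ = Real.sqrt (b ^ 2) := (Real.sqrt_sq_eq_abs b).symm
    _ ≤ Real.sqrt x := Real.sqrt_le_sqrt hx

lemma gamma_ratio_sq_bounds (x : ℝ) (hx : 1 ≤ x) :
    x - 1/2 ≤ (Real.Gamma (x + 1/2) / Real.Gamma x) ^ 2 ∧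
      (Real.Gamma (x + 1/2) / Real.Gamma x) ^ 2 ≤ x := by
  have hx0 : (0:ℝ) < x := lt_of_lt_of_le one_pos hx
  have hg : 0 < Real.Gamma x := Real.Gamma_pos_of_pos hx0
  have hg2 : 0 < Real.Gamma (x + 1/2) := Real.Gamma_pos_of_pos (by linarith)
  have hxm : (0:ℝ) < x - 1/2 := by linarith
  have hgm : 0 < Real.Gamma (x - 1/2) := Real.Gamma_pos_of_pos hxm
  have hg1 : 0 < Real.Gamma (x + 1) := Real.Gamma_pos_of_pos (by linarith)
  have hc := Real.convexOn_log_Gamma.2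
  -- upper bound
  have hmid1 : (1/2 : ℝ) • x + (1/2 : ℝ) • (x + 1) = x + 1/2 := by
    simp [smul_eq_mul]; ring
  have h1 := hc (Set.mem_Ioi.mpr hx0) (Set.mem_Ioi.mpr (by linarith : (0:ℝ) < x + 1))
    (by norm_num : (0:ℝ) ≤ 1/2) (by norm_num : (0:ℝ) ≤ 1/2) (by norm_num)
  rw [hmid1] at h1
  simp only [Function.comp, smul_eq_mul] at h1
  have hrec : Real.Gamma (x + 1) = x * Real.Gamma x := Real.Gamma_add_one (ne_of_gt hx0)
  have e1 : Real.exp (2 * Real.log (Real.Gamma (x + 1/2))) = Real.Gamma (x + 1/2) ^ 2 := by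
    rw [two_mul, Real.exp_add, Real.exp_log hg2, sq]
  have e2 : Real.exp (Real.log (Real.Gamma x) + Real.log (Real.Gamma (x + 1)))
      = Real.Gamma x * Real.Gamma (x + 1) := by
    rw [Real.exp_add, Real.exp_log hg, Real.exp_log hg1]
  have hupper : Real.Gamma (x + 1/2) ^ 2 ≤ x * Real.Gamma x ^ 2 := by
    have hle := Real.exp_le_exp.mpr (show 2 * Real.log (Real.Gamma (x + 1/2))
        ≤ Real.log (Real.Gamma x) + Real.log (Real.Gamma (x + 1)) by linarith)
    rw [e1, e2, hrec] at hle
    nlinarith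
  -- lower bound
  have hmid2 : (1/2 : ℝ) • (x - 1/2) + (1/2 : ℝ) • (x + 1/2) = x := by
    simp [smul_eq_mul]; ring
  have h2 := hc (Set.mem_Ioi.mpr hxm) (Set.mem_Ioi.mpr (by linarith : (0:ℝ) < x + 1/2))
    (by norm_num : (0:ℝ) ≤ 1/2) (by norm_num : (0:ℝ) ≤ 1/2) (by norm_num)
  rw [hmid2] at h2
  simp only [Function.comp, smul_eq_mul] at h2
  have hrec2 : Real.Gamma (x + 1/2) = (x - 1/2) * Real.Gamma (x - 1/2) := by
    have := Real.Gamma_add_one (ne_of_gt hxm)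
    rw [show x - 1/2 + 1 = x + 1/2 by ring] at this
    exact this
  have e3 : Real.exp (2 * Real.log (Real.Gamma x)) = Real.Gamma x ^ 2 := by
    rw [two_mul, Real.exp_add, Real.exp_log hg, sq]
  have e4 : Real.exp (Real.log (Real.Gamma (x - 1/2)) + Real.log (Real.Gamma (x + 1/2)))
      = Real.Gamma (x - 1/2) * Real.Gamma (x + 1/2) := by
    rw [Real.exp_add, Real.exp_log hgm, Real.exp_log hg2]
  have hlower : (x - 1/2) * Real.Gamma x ^ 2 ≤ Real.Gamma (x + 1/2) ^ 2 := by
    have hle := Real.exp_le_exp.mpr (show 2 * Real.log (Real.Gamma x)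
        ≤ Real.log (Real.Gamma (x - 1/2)) + Real.log (Real.Gamma (x + 1/2)) by linarith)
    rw [e3, e4] at hle
    -- Γx² ≤ Γ(x-1/2)·Γ(x+1/2) and Γ(x+1/2) = (x-1/2)·Γ(x-1/2)
    have hgm' : Real.Gamma (x - 1/2) = Real.Gamma (x + 1/2) / (x - 1/2) := by
      rw [hrec2, mul_div_cancel_left₀ _ hxm.ne']
    rw [hgm'] at hle
    rw [div_mul_eq_mul_div, ← sq] at hle
    calc (x - 1/2) * Real.Gamma x ^ 2
        ≤ (x - 1/2) * (Real.Gamma (x + 1/2) ^ 2 / (x - 1/2)) := by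
          exact mul_le_mul_of_nonneg_left hle (le_of_lt hxm)
      _ = Real.Gamma (x + 1/2) ^ 2 := by
          rw [mul_comm, div_mul_cancel₀ _ hxm.ne']
  constructor
  · rw [div_pow, le_div_iff₀ (by positivity)]
    linarith
  · rw [div_pow, div_le_iff₀ (by positivity)]
    linarith

/-- Asymptotics of the repetition probability: with `λ₁ = qρβ²τ²/(α+σ²)`,
`C_M = Γ(M+1/2)/Γ(M)`, `ζ_M = C_M² qρβ²τ²/(σ² + 2(ρβτ - ε))` and
`D_M = λ₁(M - C_M²) + σ² + Υ + qβτ - λ₁` (which is positive),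
the quantity `Q((√ζ_M - C_M √λ₁)/√D_M)` converges, as `M → ∞`, to `0` if
`ρβτ < α/2 + ε`, to `1/2` if `ρβτ = α/2 + ε`, and to `1` if `ρβτ > α/2 + ε`. -/
theorem repetition_probability_asymptotics
    (ρ q β τ σ2 Υ α ε : ℝ) (hρ : 0 < ρ) (hq : 0 < q) (hβ : 0 < β) (hτ : 0 < τ)
    (hσ2 : 0 < σ2) (hΥ : 0 < Υ) (hα : ρ * β * τ ≤ α) (hε : ε < ρ * β * τ / 2) :
    let l1 : ℝ := q * ρ * β ^ 2 * τ ^ 2 / (α + σ2)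
    let C : ℕ → ℝ := fun M => Real.Gamma (M + 1 / 2) / Real.Gamma M
    let ζ : ℕ → ℝ := fun M => (C M) ^ 2 * q * ρ * β ^ 2 * τ ^ 2 / (σ2 + 2 * (ρ * β * τ - ε))
    let D : ℕ → ℝ := fun M => l1 * (M - (C M) ^ 2) + σ2 + Υ + q * β * τ - l1
    (∀ M : ℕ, 1 ≤ M → 0 < D M) ∧
    (ρ * β * τ < α / 2 + ε →
      Tendsto (fun M : ℕ => gaussQ ((Real.sqrt (ζ M) - C M * Real.sqrt l1) / Real.sqrt (D M)))
        atTop (nhds 0)) ∧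
    (ρ * β * τ = α / 2 + ε →
      Tendsto (fun M : ℕ => gaussQ ((Real.sqrt (ζ M) - C M * Real.sqrt l1) / Real.sqrt (D M)))
        atTop (nhds (1 / 2))) ∧
    (ρ * β * τ > α / 2 + ε →
      Tendsto (fun M : ℕ => gaussQ ((Real.sqrt (ζ M) - C M * Real.sqrt l1) / Real.sqrt (D M)))
        atTop (nhds 1)) := by
  intro l1 C ζ D
  have hρβτ : 0 < ρ * β * τ := by positivity
  have hd1 : 0 < α + σ2 := by linarith
  have hd2 : 0 < σ2 + 2 * (ρ * β * τ - ε) := by linarith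
  have hA : 0 < q * ρ * β ^ 2 * τ ^ 2 := by positivity
  have hl1 : 0 < l1 := by exact div_pos hA hd1
  set l2 : ℝ := q * ρ * β ^ 2 * τ ^ 2 / (σ2 + 2 * (ρ * β * τ - ε)) with hl2def
  have hl2 : 0 < l2 := div_pos hA hd2
  have hl1q : l1 < q * β * τ := by
    rw [div_lt_iff₀ hd1]
    have : q * ρ * β ^ 2 * τ ^ 2 = q * β * τ * (ρ * β * τ) := by ring
    rw [this]
    have hqβτ : 0 < q * β * τ := by positivity
    have : ρ * β * τ < α + σ2 := by linarith
    exact mul_lt_mul_of_pos_left this hqβτ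
  -- Gamma bounds
  have hCb : ∀ M : ℕ, 1 ≤ M → (M:ℝ) - 1/2 ≤ (C M) ^ 2 ∧ (C M) ^ 2 ≤ (M:ℝ) := by
    intro M hM
    exact gamma_ratio_sq_bounds (M:ℝ) (by exact_mod_cast hM)
  have hCpos : ∀ M : ℕ, 1 ≤ M → 0 < C M := by
    intro M hM
    have hM0 : (0:ℝ) < (M:ℝ) := by exact_mod_cast hM
    exact div_pos (Real.Gamma_pos_of_pos (by linarith)) (Real.Gamma_pos_of_pos hM0)
  -- D bounds
  have hDpos : ∀ M : ℕ, 1 ≤ M → 0 < D M := by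
    intro M hM
    have h := hCb M hM
    have : 0 ≤ l1 * ((M:ℝ) - (C M) ^ 2) := mul_nonneg hl1.le (by linarith [h.2])
    simp only [D]
    nlinarith
  have hDle : ∀ M : ℕ, 1 ≤ M → D M ≤ σ2 + Υ + q * β * τ := by
    intro M hM
    have h := hCb M hM
    have : l1 * ((M:ℝ) - (C M) ^ 2) ≤ l1 * (1/2) := by
      apply mul_le_mul_of_nonneg_left _ hl1.le
      linarith [h.1]
    simp only [D]
    nlinarith
  have hK : 0 < σ2 + Υ + q * β * τ := by positivity
  -- numerator rewrite
  have hnum : ∀ M : ℕ, 1 ≤ M →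
      Real.sqrt (ζ M) - C M * Real.sqrt l1 = C M * (Real.sqrt l2 - Real.sqrt l1) := by
    intro M hM
    have hzeq : ζ M = (C M) ^ 2 * l2 := by
      simp only [ζ, hl2def]
      ring
    have hC0 : 0 ≤ C M := (hCpos M hM).le
    rw [hzeq, Real.sqrt_mul (sq_nonneg _), Real.sqrt_sq hC0]
    ring
  -- generic atTop divergence lemma for the argument
  have hArgTop : ∀ c : ℝ, 0 < c →
      Tendsto (fun M : ℕ => C M * c / Real.sqrt (D M)) atTop atTop := by
    intro c hc
    have hKs : 0 < Real.sqrt (σ2 + Υ + q * β * τ) := Real.sqrt_pos.mpr hK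
    have hbase : Tendsto (fun M : ℕ => Real.sqrt ((M:ℝ) - 1/2) * c
        / Real.sqrt (σ2 + Υ + q * β * τ)) atTop atTop := by
      have h1 : Tendsto (fun M : ℕ => (M:ℝ) - 1/2) atTop atTop :=
        tendsto_atTop_add_const_right _ _ tendsto_natCast_atTop_atTop
      exact ((tendsto_sqrt_atTop'.comp h1).atTop_mul_const hc).atTop_div_const hKs
    refine tendsto_atTop_mono' atTop ?_ hbase
    filter_upwards [eventually_ge_atTop 1] with M hM
    have hb := hCb M hM
    have hCp := hCpos M hM
    have hD := hDpos M hM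
    have hsC : Real.sqrt ((M:ℝ) - 1/2) ≤ C M := by
      calc Real.sqrt ((M:ℝ) - 1/2) ≤ Real.sqrt ((C M) ^ 2) := Real.sqrt_le_sqrt hb.1
        _ = C M := Real.sqrt_sq hCp.le
    have hsD : Real.sqrt (D M) ≤ Real.sqrt (σ2 + Υ + q * β * τ) := Real.sqrt_le_sqrt (hDle M hM)
    exact div_le_div₀ (by positivity) (mul_le_mul_of_nonneg_right hsC hc.le)
      (Real.sqrt_pos.mpr hD) hsD
  refine ⟨hDpos, ?_, ?_, ?_⟩
  · -- case ρβτ < α/2 + ε : l1 < l2, argument → +∞, Q → 0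
    intro hcase
    have hll : l1 < l2 := by
      apply div_lt_div_of_pos_left hA hd2
      linarith
    have hc : 0 < Real.sqrt l2 - Real.sqrt l1 := by
      have := Real.sqrt_lt_sqrt hl1.le hll
      linarith
    have harg : Tendsto (fun M : ℕ =>
        (Real.sqrt (ζ M) - C M * Real.sqrt l1) / Real.sqrt (D M)) atTop atTop := by
      refine (hArgTop _ hc).congr' ?_
      filter_upwards [eventually_ge_atTop 1] with M hM
      rw [hnum M hM]
    exact gaussQ_tendsto_atTop.comp harg
  · -- case equality : l1 = l2, argument = 0, Q = 1/2
    intro hcase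
    have hll : l1 = l2 := by
      simp only [hl2def, l1]
      congr 1
      linarith
    have heq : ∀ᶠ M : ℕ in atTop, gaussQ ((Real.sqrt (ζ M) - C M * Real.sqrt l1)
        / Real.sqrt (D M)) = 1/2 := by
      filter_upwards [eventually_ge_atTop 1] with M hM
      rw [hnum M hM, hll, sub_self, mul_zero, zero_div, gaussQ_zero]
    exact Tendsto.congr' (by filter_upwards [heq] with M h using h.symm) tendsto_const_nhds
  · -- case ρβτ > α/2 + ε : l2 < l1, argument → -∞, Q → 1
    intro hcase
    have hll : l2 < l1 := by
      apply div_lt_div_of_pos_left hA hd1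
      linarith
    have hc : 0 < Real.sqrt l1 - Real.sqrt l2 := by
      have := Real.sqrt_lt_sqrt hl2.le hll
      linarith
    have hneg := hArgTop _ hc
    have harg : Tendsto (fun M : ℕ =>
        (Real.sqrt (ζ M) - C M * Real.sqrt l1) / Real.sqrt (D M)) atTop atBot := by
      have h2 : Tendsto (fun M : ℕ => -(C M * (Real.sqrt l1 - Real.sqrt l2)
          / Real.sqrt (D M))) atTop atBot := tendsto_neg_atTop_atBot.comp hneg
      refine h2.congr' ?_
      filter_upwards [eventually_ge_atTop 1] with M hM
      rw [hnum M hM]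
      ring
    exact gaussQ_tendsto_atBot.comp harg
end
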